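/- arXiv:1810.09749 — 2 statements merged into one kernel-verified Lean document; each statement's English description precedes it below -/
import Mathlib

section
/- Let r be a positive radially symmetric solution of −(1/2)(1+‖∇r‖_2²)Δr + r = r^{2p+1} in H¹(ℝ³). Then the Pohozaev-type identity yields E(r) = (3/2 − 5/(2p+2))‖r‖_{2p+2}^{2p+2} − (1/4)‖∇r‖_2⁴, and if p ∈ (0, 2/3) then E(r) < −(1/4)‖∇r‖_2⁴ < 0, where E(u) = (1/2)‖∇u‖_2² + (1/4)‖∇u‖_2⁴ − (1/(p+1))‖u‖_{2p+2}^{2p+2}. -/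
open Real

/-- If `r` is a positive solution of the Kirchhoff limit equation
`−(1/2)(1+‖∇r‖₂²)Δr + r = r^{2p+1}` satisfying the energy identity
(testing with `r`) and the Pohozaev identity, then with `G = ‖∇r‖₂²`,
`N = ‖r‖₂²`, `P = ‖r‖_{2p+2}^{2p+2}`, the Kirchhoff energy
`E(r) = (1/2)G + (1/4)G² − P/(p+1)` satisfies
`E(r) = (3/2 − 5/(2p+2))P − (1/4)G²` and, for `p ∈ (0, 2/3)`,
`E(r) < −(1/4)G² < 0`. -/
theorem kirchhoff_groundState_energy_negative (p G N P : ℝ)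
    (hp : 0 < p) (hp2 : p < 2 / 3)
    (hG : 0 < G) (hN : 0 < N) (hP : 0 < P)
    -- energy identity: (1/2)(1+‖∇r‖²)‖∇r‖² + ‖r‖² = ‖r‖_{2p+2}^{2p+2}
    (henergy : (1 / 2) * (1 + G) * G + N = P)
    -- Pohozaev identity for −(1/2)(1+G)Δr + r = r^{2p+1} in ℝ³
    (hpoho : (1 / 4) * (1 + G) * G + (3 / 2) * N = (3 / (2 * p + 2)) * P) :
    (1 / 2) * G + (1 / 4) * G ^ 2 - (1 / (p + 1)) * P
        = (3 / 2 - 5 / (2 * p + 2)) * P - (1 / 4) * G ^ 2 ∧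
      (1 / 2) * G + (1 / 4) * G ^ 2 - (1 / (p + 1)) * P < -(1 / 4) * G ^ 2 ∧
      -(1 / 4) * G ^ 2 < 0 := by
  have hd : 2 * p + 2 > 0 := by linarith
  have hd' : p + 1 > 0 := by linarith
  have hpoho' : ((1 / 4) * (1 + G) * G + (3 / 2) * N) * (2 * p + 2) = 3 * P := by
    field_simp at hpoho; linarith
  have key : (1 / 2) * G + (1 / 4) * G ^ 2 - (1 / (p + 1)) * P
      = (3 / 2 - 5 / (2 * p + 2)) * P - (1 / 4) * G ^ 2 := by
    field_simp
    ring_nf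
    nlinarith [hpoho', henergy, sq_nonneg G]
  refine ⟨key, ?_, by nlinarith⟩
  rw [key]
  have : (3 / 2 - 5 / (2 * p + 2)) * P < 0 := by
    apply mul_neg_of_neg_of_pos _ hP
    rw [sub_neg, div_lt_div_iff₀ (by norm_num) hd]
    linarith
  linarith
end

section
/- Let r be a smooth exponentially decaying solution of −(1/2)(1+‖∇r‖_2²)Δr + r = r^{2p+1} and let L₊φ = −(1/2)(1+‖∇r‖_2²)Δφ − (∫∇r·∇φ)Δr + φ − (2p+1)r^{2p}φ. Then L₊(x·∇r) = −(1 + (1/2)‖∇r‖_2²)Δr. -/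
open MeasureTheory Real

noncomputable section

abbrev E3 := EuclideanSpace ℝ (Fin 3)

def pd (f : E3 → ℝ) (j : Fin 3) (x : E3) : ℝ := fderiv ℝ f x (EuclideanSpace.single j 1)

def lap (f : E3 → ℝ) (x : E3) : ℝ := ∑ j, fderiv ℝ (pd f j) x (EuclideanSpace.single j 1)

def gradNormSq (f : E3 → ℝ) (x : E3) : ℝ := ∑ j, (pd f j x) ^ 2

def gradDot (f g : E3 → ℝ) (x : E3) : ℝ := ∑ j, pd f j x * pd g j x

def xgrad (f : E3 → ℝ) (x : E3) : ℝ := ∑ j, x j * pd f j x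

/-- The linearized operator
`L₊φ = −(1/2)(1+‖∇r‖₂²)Δφ − (∫∇r·∇φ)Δr + φ − (2p+1)r^{2p}φ`. -/
def Lplus (p : ℝ) (r φ : E3 → ℝ) (x : E3) : ℝ :=
  -(1 / 2) * (1 + ∫ y, gradNormSq r y) * lap φ x - (∫ y, gradDot r φ y) * lap r x
    + φ x - (2 * p + 1) * (r x) ^ (2 * p) * φ x

/-! ### Auxiliary differentiation toolbox -/

lemma smooth_pd {f : E3 → ℝ} (hf : ContDiff ℝ (⊤ : ℕ∞) f) (j : Fin 3) : ContDiff ℝ (⊤ : ℕ∞) (pd f j) :=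
  (hf.fderiv_right (by simp)).clm_apply contDiff_const

lemma hasFDerivAt_pd {f : E3 → ℝ} (hf : ContDiff ℝ (⊤ : ℕ∞) f) (j : Fin 3) (x : E3) :
    HasFDerivAt (pd f j) ((fderiv ℝ (fderiv ℝ f) x).flip (EuclideanSpace.single j 1)) x := by
  have h2 : HasFDerivAt (fderiv ℝ f) (fderiv ℝ (fderiv ℝ f) x) x :=
    ((hf.fderiv_right (m := (⊤ : ℕ∞)) (by simp)).differentiable (by simp) x).hasFDerivAt
  have := h2.clm_apply (hasFDerivAt_const (EuclideanSpace.single j 1 : E3) x)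
  show HasFDerivAt (fun y => fderiv ℝ f y (EuclideanSpace.single j 1)) _ x
  simpa using this

lemma pd_pd {f : E3 → ℝ} (hf : ContDiff ℝ (⊤ : ℕ∞) f) (j k : Fin 3) (x : E3) :
    pd (pd f j) k x =
      fderiv ℝ (fderiv ℝ f) x (EuclideanSpace.single k 1) (EuclideanSpace.single j 1) := by
  rw [pd, (hasFDerivAt_pd hf j x).fderiv]; rfl

lemma pd_comm {f : E3 → ℝ} (hf : ContDiff ℝ (⊤ : ℕ∞) f) (j k : Fin 3) :
    pd (pd f j) k = pd (pd f k) j := by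
  funext x
  rw [pd_pd hf, pd_pd hf]
  exact second_derivative_symmetric
    (fun y => ((hf.differentiable (by simp)) y).hasFDerivAt)
    (((hf.fderiv_right (m := (⊤ : ℕ∞)) (by simp)).differentiable (by simp) x).hasFDerivAt) _ _

lemma pd_add {a b : E3 → ℝ} (ha : Differentiable ℝ a) (hb : Differentiable ℝ b) (j : Fin 3)
    (x : E3) : pd (fun y => a y + b y) j x = pd a j x + pd b j x := by
  simp [pd, fderiv_fun_add (ha x) (hb x)]

lemma pd_sum {ι : Type*} (s : Finset ι) {F : ι → E3 → ℝ} (hF : ∀ i, Differentiable ℝ (F i))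
    (j : Fin 3) (x : E3) :
    pd (fun y => ∑ i ∈ s, F i y) j x = ∑ i ∈ s, pd (F i) j x := by
  simp [pd, fderiv_fun_sum (fun i _ => (hF i x))]

lemma pd_mul {a b : E3 → ℝ} (ha : Differentiable ℝ a) (hb : Differentiable ℝ b) (j : Fin 3)
    (x : E3) : pd (fun y => a y * b y) j x = pd a j x * b x + a x * pd b j x := by
  simp [pd, fderiv_fun_mul (ha x) (hb x)]; ring

lemma pd_const_mul {b : E3 → ℝ} (hb : Differentiable ℝ b) (c : ℝ) (j : Fin 3) (x : E3) :
    pd (fun y => c * b y) j x = c * pd b j x := by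
  simp [pd, fderiv_const_mul (hb x) c]

lemma pd_coord (k j : Fin 3) (x : E3) :
    pd (fun y : E3 => y k) j x = if k = j then 1 else 0 := by
  have : (fun y : E3 => y k) = (EuclideanSpace.proj k : E3 →L[ℝ] ℝ) := rfl
  rw [pd, this, ContinuousLinearMap.fderiv]
  simp [EuclideanSpace.single_apply]

lemma lap_eq (f : E3 → ℝ) (x : E3) : lap f x = ∑ j, pd (pd f j) j x := rfl

lemma smooth_lap {f : E3 → ℝ} (hf : ContDiff ℝ (⊤ : ℕ∞) f) : ContDiff ℝ (⊤ : ℕ∞) (lap f) := by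
  have : lap f = fun x => ∑ j, pd (pd f j) j x := rfl
  rw [this]
  exact ContDiff.sum (fun j _ => smooth_pd (smooth_pd hf j) j)

lemma smooth_coord (k : Fin 3) : ContDiff ℝ (⊤ : ℕ∞) (fun y : E3 => y k) :=
  (EuclideanSpace.proj k : E3 →L[ℝ] ℝ).contDiff

lemma pd_xgrad {g : E3 → ℝ} (hg : ContDiff ℝ (⊤ : ℕ∞) g) (j : Fin 3) (x : E3) :
    pd (xgrad g) j x = pd g j x + ∑ k, x k * pd (pd g k) j x := by
  have hx : xgrad g = fun y => ∑ k, (fun z : E3 => z k * pd g k z) y := rfl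
  rw [hx, pd_sum _ (fun k => ((smooth_coord k).mul (smooth_pd hg k)).differentiable (by simp))]
  have : ∀ k, pd (fun z : E3 => z k * pd g k z) j x
      = (if k = j then 1 else 0) * pd g k x + x k * pd (pd g k) j x := by
    intro k
    rw [pd_mul ((smooth_coord k).differentiable (by simp))
      ((smooth_pd hg k).differentiable (by simp)), pd_coord]
  simp only [this]
  rw [Finset.sum_add_distrib]
  congr 1
  simp

lemma lap_xgrad {f : E3 → ℝ} (hf : ContDiff ℝ (⊤ : ℕ∞) f) (x : E3) :
    lap (xgrad f) x = 2 * lap f x + xgrad (lap f) x := by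
  have hpdx : ∀ j, pd (xgrad f) j = fun y => pd f j y + ∑ k, y k * pd (pd f k) j y :=
    fun j => funext (fun y => pd_xgrad hf j y)
  have hdiff3 : ∀ k j, Differentiable ℝ (pd (pd f k) j) :=
    fun k j => (smooth_pd (smooth_pd hf k) j).differentiable (by simp)
  have step : ∀ j, pd (pd (xgrad f) j) j x
      = 2 * pd (pd f j) j x + ∑ k, x k * pd (pd (pd f k) j) j x := by
    intro j
    rw [hpdx j]
    rw [pd_add ((smooth_pd hf j).differentiable (by simp))
      (Differentiable.fun_sum (fun k _ =>
        (((smooth_coord k).mul (smooth_pd (smooth_pd hf k) j)).differentiable (by simp))))]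
    rw [pd_sum _
      (fun k => ((smooth_coord k).mul (smooth_pd (smooth_pd hf k) j)).differentiable (by simp))]
    have : ∀ k, pd (fun z : E3 => z k * pd (pd f k) j z) j x
        = (if k = j then 1 else 0) * pd (pd f k) j x + x k * pd (pd (pd f k) j) j x := by
      intro k
      rw [pd_mul ((smooth_coord k).differentiable (by simp)) (hdiff3 k j), pd_coord]
    simp only [this]
    rw [Finset.sum_add_distrib]
    have : (∑ k, (if k = j then (1:ℝ) else 0) * pd (pd f k) j x) = pd (pd f j) j x := by simp
    rw [this]; ring
  have swap3 : ∀ j k, pd (pd (pd f k) j) j = pd (pd (pd f j) j) k := by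
    intro j k
    rw [pd_comm hf k j]
    exact (pd_comm (smooth_pd hf j) j k).symm
  have hpdlap : ∀ k, pd (lap f) k x = ∑ j, pd (pd (pd f j) j) k x := by
    intro k
    have : lap f = fun y => ∑ j, pd (pd f j) j y := rfl
    rw [this, pd_sum _ (fun j => (smooth_pd (smooth_pd hf j) j).differentiable (by simp))]
  rw [lap_eq]
  simp only [step]
  rw [Finset.sum_add_distrib, ← Finset.mul_sum, Finset.sum_comm]
  rw [← lap_eq]
  congr 1
  rw [xgrad]
  apply Finset.sum_congr rfl
  intro k _
  rw [← Finset.mul_sum, hpdlap k]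
  congr 1
  exact Finset.sum_congr rfl (fun j _ => by rw [swap3 j k])

lemma smooth_gradNormSq {f : E3 → ℝ} (hf : ContDiff ℝ (⊤ : ℕ∞) f) : ContDiff ℝ (⊤ : ℕ∞) (gradNormSq f) := by
  have : gradNormSq f = fun x => ∑ j, (pd f j x) ^ 2 := rfl
  rw [this]
  exact ContDiff.sum (fun j _ => (smooth_pd hf j).pow 2)

lemma pd_gradNormSq {f : E3 → ℝ} (hf : ContDiff ℝ (⊤ : ℕ∞) f) (k : Fin 3) (x : E3) :
    pd (gradNormSq f) k x = ∑ j, 2 * (pd f j x * pd (pd f j) k x) := by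
  have h1 : gradNormSq f = fun y => ∑ j, (fun z => pd f j z * pd f j z) y := by
    funext y; simp [gradNormSq, sq]
  rw [h1, pd_sum _ (fun j => ((smooth_pd hf j).mul (smooth_pd hf j)).differentiable (by simp))]
  apply Finset.sum_congr rfl
  intro j _
  rw [pd_mul ((smooth_pd hf j).differentiable (by simp)) ((smooth_pd hf j).differentiable (by simp))]
  ring

lemma gradDot_xgrad {f : E3 → ℝ} (hf : ContDiff ℝ (⊤ : ℕ∞) f) (x : E3) :
    gradDot f (xgrad f) x = gradNormSq f x + (1/2) * ∑ k, x k * pd (gradNormSq f) k x := by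
  rw [gradDot]
  have : ∀ j : Fin 3, pd f j x * pd (xgrad f) j x
      = pd f j x ^ 2 + ∑ k, x k * (pd f j x * pd (pd f j) k x) := by
    intro j
    rw [pd_xgrad hf j x, mul_add, Finset.mul_sum, sq]
    congr 1
    exact Finset.sum_congr rfl (fun k _ => by rw [pd_comm hf k j]; ring)
  simp only [this]
  rw [Finset.sum_add_distrib]
  congr 1
  rw [Finset.mul_sum, Finset.sum_comm]
  apply Finset.sum_congr rfl
  intro k _
  rw [pd_gradNormSq hf k x, Finset.mul_sum, Finset.mul_sum]
  exact Finset.sum_congr rfl (fun j _ => by ring)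

/-! ### Integrability from exponential decay -/

lemma abs_coord_le_norm (x : E3) (k : Fin 3) : |x k| ≤ ‖x‖ := by
  have h : x k = inner ℝ x (EuclideanSpace.single k (1:ℝ)) := by
    rw [EuclideanSpace.inner_single_right]; simp
  rw [h]
  calc |inner ℝ x (EuclideanSpace.single k (1:ℝ))| ≤ ‖x‖ * ‖EuclideanSpace.single k (1:ℝ)‖ :=
        abs_real_inner_le_norm _ _
    _ = ‖x‖ := by rw [EuclideanSpace.norm_single]; simp

lemma integrable_exp_decay {a : ℝ} (ha : 0 < a) :
    Integrable (fun x : E3 => Real.exp (-a * ‖x‖)) := by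
  set m : ℝ := min 1 (a/4) with hm
  have hm0 : 0 < m := lt_min one_pos (by linarith)
  have key : ∀ x : E3, ‖Real.exp (-a * ‖x‖)‖ ≤ (m⁻¹)^4 * (1 + ‖x‖) ^ (-(4:ℝ)) := by
    intro x
    set t := ‖x‖ with ht
    have ht0 : 0 ≤ t := norm_nonneg x
    have h1t : (0:ℝ) < 1 + t := by linarith
    have h1 : m * (1 + t) ≤ Real.exp ((a/4) * t) := by
      have := Real.add_one_le_exp ((a/4)*t)
      have hmt : m * (1 + t) ≤ 1 + (a/4) * t := by
        have h2 : m * t ≤ (a/4) * t := mul_le_mul_of_nonneg_right (min_le_right _ _) ht0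
        have h3 : m ≤ 1 := min_le_left _ _
        nlinarith
      linarith
    have h4 : (m * (1 + t))^4 ≤ Real.exp (a * t) := by
      calc (m * (1 + t))^4 ≤ (Real.exp ((a/4)*t))^4 := by
            apply pow_le_pow_left₀ (by positivity) h1
        _ = Real.exp (a * t) := by
            rw [← Real.exp_nat_mul]; ring_nf
    have h5 : Real.exp (-a * t) ≤ (m⁻¹)^4 * ((1+t)^4)⁻¹ := by
      rw [neg_mul, Real.exp_neg]
      rw [inv_pow, ← mul_inv]
      apply inv_anti₀ (by positivity)
      calc m ^ 4 * (1+t)^4 = (m * (1+t))^4 := by ring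
        _ ≤ Real.exp (a * t) := h4
    calc ‖Real.exp (-a * t)‖ = Real.exp (-a * t) := Real.norm_of_nonneg (Real.exp_pos _).le
      _ ≤ (m⁻¹)^4 * ((1+t)^4)⁻¹ := h5
      _ = (m⁻¹)^4 * (1 + t) ^ (-(4:ℝ)) := by
          rw [Real.rpow_neg h1t.le]
          norm_num
  have hint : Integrable (fun x : E3 => (m⁻¹)^4 * (1 + ‖x‖) ^ (-(4:ℝ))) := by
    apply Integrable.const_mul
    apply integrable_one_add_norm (μ := volume)
    rw [finrank_euclideanSpace]
    norm_num
  exact hint.mono'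
    ((Real.continuous_exp.comp (continuous_const.mul continuous_norm)).aestronglyMeasurable)
    (Filter.Eventually.of_forall key)

lemma integrable_of_exp_bound {g : E3 → ℝ} (hg : Continuous g) {c a : ℝ} (ha : 0 < a)
    (hb : ∀ x, |g x| ≤ c * Real.exp (-a * ‖x‖)) : Integrable g :=
  ((integrable_exp_decay ha).const_mul c).mono' hg.aestronglyMeasurable
    (Filter.Eventually.of_forall fun x => by simpa [Real.norm_eq_abs] using hb x)

lemma t_exp_bound {a : ℝ} (ha : 0 < a) {t : ℝ} (ht : 0 ≤ t) :
    t * (Real.exp (-a * t) * Real.exp (-a * t)) ≤ a⁻¹ * Real.exp (-a * t) := by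
  have h1 : t ≤ a⁻¹ * Real.exp (a * t) := by
    have h := Real.add_one_le_exp (a * t)
    rw [← mul_le_mul_iff_right₀ ha]
    have he : a * (a⁻¹ * Real.exp (a*t)) = Real.exp (a*t) := by field_simp
    rw [he]; linarith
  have h2 : Real.exp (a*t) * (Real.exp (-a * t) * Real.exp (-a * t)) = Real.exp (-a*t) := by
    rw [← Real.exp_add, ← Real.exp_add]; ring_nf
  calc t * (Real.exp (-a * t) * Real.exp (-a * t))
      ≤ (a⁻¹ * Real.exp (a*t)) * (Real.exp (-a * t) * Real.exp (-a * t)) := by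
        apply mul_le_mul_of_nonneg_right h1 (by positivity)
    _ = a⁻¹ * Real.exp (-a*t) := by rw [mul_assoc, h2]

section Decay

variable {r : E3 → ℝ} {c a : ℝ}

lemma bound_pd
    (hb : ∀ x : E3, |r x| + ‖fderiv ℝ r x‖ + ‖fderiv ℝ (fderiv ℝ r) x‖ ≤ c * Real.exp (-a * ‖x‖))
    (j : Fin 3) (x : E3) : |pd r j x| ≤ c * Real.exp (-a * ‖x‖) := by
  have h1 : |pd r j x| ≤ ‖fderiv ℝ r x‖ := by
    rw [pd, ← Real.norm_eq_abs]
    calc ‖fderiv ℝ r x (EuclideanSpace.single j 1)‖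
        ≤ ‖fderiv ℝ r x‖ * ‖(EuclideanSpace.single j 1 : E3)‖ := (fderiv ℝ r x).le_opNorm _
      _ = ‖fderiv ℝ r x‖ := by rw [EuclideanSpace.norm_single]; simp
  have := hb x
  have h2 := abs_nonneg (r x)
  have h3 := norm_nonneg (fderiv ℝ (fderiv ℝ r) x)
  linarith

lemma bound_pd_pd (hsmooth : ContDiff ℝ (⊤ : ℕ∞) r)
    (hb : ∀ x : E3, |r x| + ‖fderiv ℝ r x‖ + ‖fderiv ℝ (fderiv ℝ r) x‖ ≤ c * Real.exp (-a * ‖x‖))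
    (j k : Fin 3) (x : E3) : |pd (pd r j) k x| ≤ c * Real.exp (-a * ‖x‖) := by
  have h1 : |pd (pd r j) k x| ≤ ‖fderiv ℝ (fderiv ℝ r) x‖ := by
    rw [pd_pd hsmooth, ← Real.norm_eq_abs]
    calc ‖fderiv ℝ (fderiv ℝ r) x (EuclideanSpace.single k 1) (EuclideanSpace.single j 1)‖
        ≤ ‖fderiv ℝ (fderiv ℝ r) x‖ * ‖(EuclideanSpace.single k 1 : E3)‖ *
            ‖(EuclideanSpace.single j 1 : E3)‖ :=
          (fderiv ℝ (fderiv ℝ r) x).le_opNorm₂ _ _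
      _ = ‖fderiv ℝ (fderiv ℝ r) x‖ := by rw [EuclideanSpace.norm_single]; simp
  have := hb x
  have h2 := abs_nonneg (r x)
  have h3 := norm_nonneg (fderiv ℝ r x)
  linarith

lemma bound_gradNormSq
    (hb : ∀ x : E3, |r x| + ‖fderiv ℝ r x‖ + ‖fderiv ℝ (fderiv ℝ r) x‖ ≤ c * Real.exp (-a * ‖x‖))
    (x : E3) : |gradNormSq r x| ≤ 3 * c^2 * (Real.exp (-a * ‖x‖) * Real.exp (-a * ‖x‖)) := by
  have h : ∀ j : Fin 3, (pd r j x)^2 ≤ c^2 * (Real.exp (-a * ‖x‖) * Real.exp (-a * ‖x‖)) := by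
    intro j
    have h1 := bound_pd hb j x
    have h0 := abs_nonneg (pd r j x)
    nlinarith [sq_abs (pd r j x)]
  rw [gradNormSq]
  have hnn : ∀ j : Fin 3, (0:ℝ) ≤ (pd r j x)^2 := fun j => sq_nonneg _
  rw [abs_of_nonneg (Finset.sum_nonneg (fun j _ => hnn j))]
  calc (∑ j, (pd r j x)^2)
      ≤ ∑ _j : Fin 3, c^2 * (Real.exp (-a * ‖x‖) * Real.exp (-a * ‖x‖)) :=
        Finset.sum_le_sum (fun j _ => h j)
    _ = 3 * c^2 * (Real.exp (-a * ‖x‖) * Real.exp (-a * ‖x‖)) := by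
        rw [Finset.sum_const]; simp; ring

lemma bound_pd_gradNormSq (hsmooth : ContDiff ℝ (⊤ : ℕ∞) r)
    (hb : ∀ x : E3, |r x| + ‖fderiv ℝ r x‖ + ‖fderiv ℝ (fderiv ℝ r) x‖ ≤ c * Real.exp (-a * ‖x‖))
    (k : Fin 3) (x : E3) :
    |pd (gradNormSq r) k x| ≤ 6 * c^2 * (Real.exp (-a * ‖x‖) * Real.exp (-a * ‖x‖)) := by
  rw [pd_gradNormSq hsmooth]
  calc |∑ j, 2 * (pd r j x * pd (pd r j) k x)|
      ≤ ∑ j, |2 * (pd r j x * pd (pd r j) k x)| := Finset.abs_sum_le_sum_abs _ _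
    _ ≤ ∑ _j : Fin 3, 2 * (c^2 * (Real.exp (-a * ‖x‖) * Real.exp (-a * ‖x‖))) := by
        apply Finset.sum_le_sum
        intro j _
        rw [abs_mul, abs_mul]
        have h1 := bound_pd hb j x
        have h2 := bound_pd_pd hsmooth hb j k x
        have h01 := abs_nonneg (pd r j x)
        have h02 := abs_nonneg (pd (pd r j) k x)
        rw [abs_of_nonneg (by norm_num : (0:ℝ) ≤ (2:ℝ))]
        nlinarith
    _ = 6 * c^2 * (Real.exp (-a * ‖x‖) * Real.exp (-a * ‖x‖)) := by
        rw [Finset.sum_const]; simp; ring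

end Decay

section Int

variable {r : E3 → ℝ} {c a : ℝ}

lemma int_coord_mul_G (hsmooth : ContDiff ℝ (⊤ : ℕ∞) r) (ha : 0 < a)
    (hb : ∀ x : E3, |r x| + ‖fderiv ℝ r x‖ + ‖fderiv ℝ (fderiv ℝ r) x‖ ≤ c * Real.exp (-a * ‖x‖))
    (k : Fin 3) : Integrable (fun x : E3 => x k * gradNormSq r x) := by
  apply integrable_of_exp_bound (c := 3 * c^2 * a⁻¹)
    (((EuclideanSpace.proj k : E3 →L[ℝ] ℝ).continuous).mul
      ((smooth_gradNormSq hsmooth).continuous)) ha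
  intro x
  rw [Pi.mul_apply, abs_mul]
  calc |x k| * |gradNormSq r x|
      ≤ ‖x‖ * (3 * c^2 * (Real.exp (-a * ‖x‖) * Real.exp (-a * ‖x‖))) :=
        mul_le_mul (abs_coord_le_norm x k) (bound_gradNormSq hb x) (abs_nonneg _) (norm_nonneg _)
    _ = 3 * c^2 * (‖x‖ * (Real.exp (-a * ‖x‖) * Real.exp (-a * ‖x‖))) := by ring
    _ ≤ 3 * c^2 * (a⁻¹ * Real.exp (-a * ‖x‖)) :=
        mul_le_mul_of_nonneg_left (t_exp_bound ha (norm_nonneg x)) (by positivity)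
    _ = 3 * c^2 * a⁻¹ * Real.exp (-a * ‖x‖) := by ring

lemma int_coord_mul_pdG (hsmooth : ContDiff ℝ (⊤ : ℕ∞) r) (ha : 0 < a)
    (hb : ∀ x : E3, |r x| + ‖fderiv ℝ r x‖ + ‖fderiv ℝ (fderiv ℝ r) x‖ ≤ c * Real.exp (-a * ‖x‖))
    (k l : Fin 3) : Integrable (fun x : E3 => x k * pd (gradNormSq r) l x) := by
  apply integrable_of_exp_bound (c := 6 * c^2 * a⁻¹)
    (((EuclideanSpace.proj k : E3 →L[ℝ] ℝ).continuous).mul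
      ((smooth_pd (smooth_gradNormSq hsmooth) l).continuous)) ha
  intro x
  rw [Pi.mul_apply, abs_mul]
  calc |x k| * |pd (gradNormSq r) l x|
      ≤ ‖x‖ * (6 * c^2 * (Real.exp (-a * ‖x‖) * Real.exp (-a * ‖x‖))) :=
        mul_le_mul (abs_coord_le_norm x k) (bound_pd_gradNormSq hsmooth hb l x)
          (abs_nonneg _) (norm_nonneg _)
    _ = 6 * c^2 * (‖x‖ * (Real.exp (-a * ‖x‖) * Real.exp (-a * ‖x‖))) := by ring
    _ ≤ 6 * c^2 * (a⁻¹ * Real.exp (-a * ‖x‖)) :=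
        mul_le_mul_of_nonneg_left (t_exp_bound ha (norm_nonneg x)) (by positivity)
    _ = 6 * c^2 * a⁻¹ * Real.exp (-a * ‖x‖) := by ring

lemma ibp_key (hsmooth : ContDiff ℝ (⊤ : ℕ∞) r) (ha : 0 < a)
    (hb : ∀ x : E3, |r x| + ‖fderiv ℝ r x‖ + ‖fderiv ℝ (fderiv ℝ r) x‖ ≤ c * Real.exp (-a * ‖x‖))
    (hgrad : Integrable (fun x : E3 => gradNormSq r x)) (k : Fin 3) :
    ∫ x : E3, x k * pd (gradNormSq r) k x = - ∫ x : E3, gradNormSq r x := by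
  have hcoordd : ∀ x : E3,
      fderiv ℝ (fun y : E3 => y k) x (EuclideanSpace.single k 1) = 1 := by
    intro x
    have := pd_coord k k x
    simpa [pd] using this
  have h := integral_mul_fderiv_eq_neg_fderiv_mul_of_integrable (μ := volume)
    (f := fun y : E3 => y k) (g := gradNormSq r) (v := EuclideanSpace.single k 1)
    (by simpa only [hcoordd, one_mul] using hgrad)
    (int_coord_mul_pdG hsmooth ha hb k k)
    (int_coord_mul_G hsmooth ha hb k)
    (fun x _ => (smooth_coord k).differentiable (by simp) x)
    (fun x _ => (smooth_gradNormSq hsmooth).differentiable (by simp) x)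
  simp only [hcoordd, one_mul] at h
  exact h

lemma int_gradDot_eq (hsmooth : ContDiff ℝ (⊤ : ℕ∞) r) (ha : 0 < a)
    (hb : ∀ x : E3, |r x| + ‖fderiv ℝ r x‖ + ‖fderiv ℝ (fderiv ℝ r) x‖ ≤ c * Real.exp (-a * ‖x‖))
    (hgrad : Integrable (fun x : E3 => gradNormSq r x)) :
    ∫ x : E3, gradDot r (xgrad r) x = -(1/2) * ∫ x : E3, gradNormSq r x := by
  have hrw : (fun x : E3 => gradDot r (xgrad r) x)
      = fun x => gradNormSq r x + (1/2) * ∑ k, x k * pd (gradNormSq r) k x :=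
    funext (fun x => gradDot_xgrad hsmooth x)
  rw [hrw]
  have hintsum : Integrable (fun x : E3 => ∑ k, x k * pd (gradNormSq r) k x) :=
    integrable_finset_sum _ (fun k _ => int_coord_mul_pdG hsmooth ha hb k k)
  rw [integral_add hgrad (hintsum.const_mul (1/2)), MeasureTheory.integral_const_mul,
    integral_finset_sum _ (fun k _ => int_coord_mul_pdG hsmooth ha hb k k)]
  have : ∀ k ∈ (Finset.univ : Finset (Fin 3)),
      ∫ x : E3, x k * pd (gradNormSq r) k x = - ∫ x : E3, gradNormSq r x :=
    fun k _ => ibp_key hsmooth ha hb hgrad k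
  rw [Finset.sum_congr rfl this, Finset.sum_const]
  simp
  ring

end Int

/-- if `r` is a smooth exponentially decaying positive solution of
`−(1/2)(1+‖∇r‖₂²)Δr + r = r^{2p+1}`, then
`L₊(x·∇r) = −(1 + (1/2)‖∇r‖₂²)Δr`. -/
theorem Lplus_of_radial_derivative (p : ℝ) (hp : 0 < p) (hp2 : p < 2 / 3)
    (r : E3 → ℝ) (hrpos : ∀ x, 0 < r x) (hsmooth : ContDiff ℝ (⊤ : ℕ∞) r)
    (hdecay : ∃ c a : ℝ, 0 < a ∧ ∀ x : E3,
      |r x| + ‖fderiv ℝ r x‖ + ‖fderiv ℝ (fderiv ℝ r) x‖ ≤ c * Real.exp (-a * ‖x‖))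
    (hgrad : Integrable (fun x => gradNormSq r x))
    (hgd : Integrable (fun x => gradDot r (xgrad r) x))
    (hpde : ∀ x : E3,
      -(1 / 2) * (1 + ∫ y, gradNormSq r y) * lap r x + r x = (r x) ^ (2 * p + 1)) :
    ∀ x : E3, Lplus p r (xgrad r) x = -(1 + (1 / 2) * ∫ y, gradNormSq r y) * lap r x := by
  obtain ⟨c, a, ha, hb⟩ := hdecay
  set I : ℝ := ∫ y, gradNormSq r y with hI
  -- the value of the nonlocal coefficient
  have hIgd : (∫ y, gradDot r (xgrad r) y) = -(1/2) * I := int_gradDot_eq hsmooth ha hb hgrad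
  -- differentiate the PDE
  have hpde' : (fun x => -(1 / 2) * (1 + I) * lap r x + r x) = fun x => (r x) ^ (2*p+1) :=
    funext hpde
  have hlapdiff : Differentiable ℝ (lap r) := (smooth_lap hsmooth).differentiable (by simp)
  have hrdiff : Differentiable ℝ r := hsmooth.differentiable (by simp)
  have hj : ∀ (j : Fin 3) (x : E3),
      -(1 / 2) * (1 + I) * pd (lap r) j x + pd r j x
        = (2*p+1) * (r x) ^ (2*p) * pd r j x := by
    intro j x
    have hL : pd (fun y => -(1 / 2) * (1 + I) * lap r y + r y) j x
        = -(1 / 2) * (1 + I) * pd (lap r) j x + pd r j x := by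
      rw [pd_add (hlapdiff.const_mul _) hrdiff, pd_const_mul hlapdiff]
    have hR : pd (fun y => (r y) ^ (2*p+1)) j x = (2*p+1) * (r x) ^ (2*p) * pd r j x := by
      have hfd : HasFDerivAt (fun y => (r y) ^ (2*p+1))
          (((2*p+1) * (r x) ^ (2*p+1-1)) • fderiv ℝ r x) x :=
        (hrdiff x).hasFDerivAt.rpow_const (Or.inl (hrpos x).ne')
      rw [pd, hfd.fderiv]
      have h21 : (2*p+1-1) = 2*p := by ring
      rw [h21]
      simp [pd]
    rw [← hL, ← hR, hpde']
  -- contract with x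
  have key : ∀ x : E3, -(1 / 2) * (1 + I) * xgrad (lap r) x + xgrad r x
      = (2*p+1) * ((r x) ^ (2*p)) * xgrad r x := by
    intro x
    have h1 : ∑ j, x j * (-(1 / 2) * (1 + I) * pd (lap r) j x + pd r j x)
        = ∑ j, x j * ((2*p+1) * (r x) ^ (2*p) * pd r j x) :=
      Finset.sum_congr rfl (fun j _ => by rw [hj j x])
    have h2 : -(1 / 2) * (1 + I) * xgrad (lap r) x + xgrad r x
        = ∑ j, x j * (-(1 / 2) * (1 + I) * pd (lap r) j x + pd r j x) := by
      rw [xgrad, xgrad, Finset.mul_sum, ← Finset.sum_add_distrib]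
      exact Finset.sum_congr rfl (fun j _ => by ring)
    have h3 : ∑ j, x j * ((2*p+1) * (r x) ^ (2*p) * pd r j x)
        = (2*p+1) * ((r x) ^ (2*p)) * xgrad r x := by
      rw [xgrad, Finset.mul_sum]
      exact Finset.sum_congr rfl (fun j _ => by ring)
    rw [h2, h1, h3]
  -- final assembly
  intro x
  rw [Lplus, ← hI, hIgd, lap_xgrad hsmooth x]
  linear_combination key x

end
end
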